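/- For EDBMs M1 and M2 in normal form, define M1 ∩ M2 entrywise as the minimum of corresponding entries when all minima exist (returning the canonical empty EDBM if some pair of entries is ≤-incomparable or if either input is empty). Then ⟦M1 ∩ M2⟧ = ⟦M1⟧ ∩ ⟦M2⟧. -/

import Mathlib

open scoped Classical

/-- Entries of an Event DBM: `(m,<)` / `(m,≤)` for `m ∈ ℤ`, `(∞,<)`, `(⊥,=)`, `(?,=)`. -/
inductive Entry where
  | bound (m : ℤ) (strict : Bool)
  | inf
  | bot
  | unc
deriving DecidableEq

/-- An EDBM on clocks `x₁,…,xₙ` (index `none` is the zero clock `x₀`). -/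
def EDBM (n : ℕ) := Option (Fin n) → Option (Fin n) → Entry

/-- A valuation of the `n` clocks (`none` is `⊥`). -/
def EVal (n : ℕ) := Fin n → Option ℝ

def ENonneg {n : ℕ} (v : EVal n) : Prop := ∀ i r, v i = some r → 0 ≤ r

/-- The signed value `|v|`: prophecy clocks (as given by `isP`) are negated;
`x₀` has value `0`. -/
def svalE {n : ℕ} (isP : Fin n → Bool) (v : EVal n) : Option (Fin n) → Option ℝ
  | none => some 0
  | some i => (v i).map (fun r => if isP i then -r else r)

/-- Satisfaction of an entry by (signed) values `a`, `b`: encodes `a − b ≺ m`,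
with `(⊥,=)` requiring one side to be `⊥`, `(∞,<)` requiring both sides real,
and `(?,=)` always true. -/
def Entry.sat : Entry → Option ℝ → Option ℝ → Prop
  | .unc, _, _ => True
  | .bot, a, b => a = none ∨ b = none
  | .inf, a, b => a ≠ none ∧ b ≠ none
  | .bound m s, a, b => ∃ ra rb, a = some ra ∧ b = some rb ∧
      (if s then ra - rb < (m : ℝ) else ra - rb ≤ (m : ℝ))

/-- `⟦M⟧`: the set of valuations satisfying all constraints of `M`. -/
def sem {n : ℕ} (isP : Fin n → Bool) (M : EDBM n) : Set (EVal n) :=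
  { v | ENonneg v ∧ ∀ i j, (M i j).sat (svalE isP v i) (svalE isP v j) }

/-- The ordering on EDBM entries: `(m,≺) ≤ (m',≺')` iff `m' = ?`, or
`m < m'` (in `ℤ ∪ {∞}`), or `m = m'` and (`≺ = ≺'` or `≺' = ≤`). -/
def Entry.le : Entry → Entry → Prop
  | _, .unc => True
  | .unc, _ => False
  | .bot, .bot => True
  | .bot, _ => False
  | _, .bot => False
  | .inf, .inf => True
  | .inf, .bound _ _ => False
  | .bound _ _, .inf => True
  | .bound m s, .bound m' s' => m < m' ∨ (m = m' ∧ (s = s' ∨ s' = false))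

/-- The canonical empty EDBM `M_∅`. -/
def Mempty (n : ℕ) : EDBM n := fun _ _ => .bound (-1) true

/-- `(⊥,=)` may only occur in row or column `0`. -/
def EDBM.WF {n : ℕ} (M : EDBM n) : Prop := ∀ i j : Fin n, M (some i) (some j) ≠ .bot

/-- Structural coherence of `⊥`/`?` entries (conditions (i)–(iii) of normal form). -/
def Coherent {n : ℕ} (M : EDBM n) : Prop :=
  (∀ i : Fin n, (M (some i) none = .bot ↔ M none (some i) = .bot) ∧
      (M (some i) none = .unc ↔ M none (some i) = .unc)) ∧
  (∀ i : Fin n, (M (some i) none = .bot ∨ M (some i) none = .unc) →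
      ∀ j : Fin n, M (some i) (some j) = .unc ∧ M (some j) (some i) = .unc) ∧
  (∀ i j : Fin n, M (some i) (some j) = .unc ↔
      ((M (some i) none = .unc ∨ M (some i) none = .bot) ∨
       (M (some j) none = .unc ∨ M (some j) none = .bot)))

/-- Tightness: no entrywise-smaller EDBM has the same semantics. -/
def Tight {n : ℕ} (isP : Fin n → Bool) (M : EDBM n) : Prop :=
  ∀ M' : EDBM n, (∀ i j, Entry.le (M' i j) (M i j)) → sem isP M' = sem isP M → M' = M

/-- Normal form: either the canonical empty EDBM, or a nonempty, well-formed,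
coherent and tight (canonical) EDBM. -/
def InNormalForm {n : ℕ} (isP : Fin n → Bool) (M : EDBM n) : Prop :=
  M = Mempty n ∨ (sem isP M ≠ ∅ ∧ M.WF ∧ Coherent M ∧ Tight isP M)

/-- The `Future` operation on EDBMs. -/
noncomputable def futureE {n : ℕ} (isP : Fin n → Bool) (M : EDBM n) : EDBM n :=
  if M = Mempty n then Mempty n else
  fun i j =>
    match i, j with
    | some k, none =>
        if M (some k) none = .bot ∨ M (some k) none = .unc then M (some k) none
        else if isP k then .bound 0 false else .inf
    | i, j => M i j

/-- The `Past` operation on EDBMs. -/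
noncomputable def pastE {n : ℕ} (isP : Fin n → Bool) (M : EDBM n) : EDBM n :=
  if M = Mempty n then Mempty n else
  fun i j =>
    match i, j with
    | none, some k =>
        if M none (some k) = .bot ∨ M none (some k) = .unc then M none (some k)
        else if isP k then .inf else .bound 0 false
    | i, j => M i j

/-- Entrywise intersection of EDBMs; `M_∅` if either input is empty or some pair
of entries is `≤`-incomparable. -/
noncomputable def interE {n : ℕ} (M₁ M₂ : EDBM n) : EDBM n :=
  if M₁ = Mempty n ∨ M₂ = Mempty n then Mempty n
  else if ∀ i j, Entry.le (M₁ i j) (M₂ i j) ∨ Entry.le (M₂ i j) (M₁ i j) then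
    fun i j => if Entry.le (M₁ i j) (M₂ i j) then M₁ i j else M₂ i j
  else Mempty n

/-- Release of clock `k`: every entry in its row and column becomes `(?,=)`. -/
noncomputable def relE {n : ℕ} (M : EDBM n) (k : Fin n) : EDBM n :=
  if M = Mempty n then Mempty n else
  fun i j => if i = some k ∨ j = some k then .unc else M i j

/-- Time elapse on valuations: history clocks increase, prophecy clocks decrease. -/
def eElapse {n : ℕ} (isP : Fin n → Bool) (v : EVal n) (t : ℝ) : EVal n :=
  fun i => (v i).map (fun r => if isP i then r - t else r + t)

def eCanElapse {n : ℕ} (isP : Fin n → Bool) (v : EVal n) (t : ℝ) : Prop :=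
  0 ≤ t ∧ ∀ i r, isP i = true → v i = some r → t ≤ r

/-!
The entrywise minimum of two comparable entries is satisfied exactly when both entries are, since
satisfaction is monotone in the entry order. Conversely, an incomparable pair is a real bound
against `(⊥,=)`, and no pair of values satisfies both; so if some pair of entries is incomparable,
`⟦M₁⟧ ∩ ⟦M₂⟧` is empty, as is `⟦M_∅⟧`, whose diagonal entry at `x₀` demands `0 - 0 < -1`.
-/

lemma sem_Mempty {n : ℕ} (isP : Fin n → Bool) : sem isP (Mempty n) = ∅ := by
  refine Set.eq_empty_of_forall_notMem fun v ⟨_, hv⟩ => ?_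
  obtain ⟨_, _, ⟨⟩, ⟨⟩, h⟩ := hv none none
  norm_num at h

namespace Entry

lemma sat_of_le {e e' : Entry} (h : e.le e') {a b : Option ℝ} (hs : e.sat a b) :
    e'.sat a b := by
  cases e <;> cases e' <;> simp_all only [Entry.le, Entry.sat] <;> try trivial
  case bound.bound m s m' s' =>
    obtain ⟨ra, rb, rfl, rfl, hl⟩ := hs
    refine ⟨ra, rb, rfl, rfl, ?_⟩
    rcases h with h | ⟨rfl, rfl | rfl⟩
    · have hm : (m : ℝ) < m' := by exact_mod_cast h
      cases s <;> cases s' <;> simp only [Bool.false_eq_true, if_false, if_true] at hl ⊢ <;>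
        linarith
    · exact hl
    · cases s <;> simp only [Bool.false_eq_true, if_false, if_true] at hl ⊢ <;> linarith
  case bound.inf =>
    obtain ⟨ra, rb, rfl, rfl, -⟩ := hs
    simp

lemma not_sat_bot_of_le_inf {e : Entry} {a b : Option ℝ} (hs : e.sat a b) (he : e.le inf) :
    ¬ bot.sat a b := by
  obtain ⟨ha, hb⟩ := sat_of_le he hs
  rintro (rfl | rfl) <;> contradiction

lemma le_or_le_of_sat {e e' : Entry} {a b : Option ℝ} (hs : e.sat a b) (hs' : e'.sat a b) :
    e.le e' ∨ e'.le e := by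
  cases e <;> cases e' <;> simp only [Entry.le, or_true, true_or]
  case bound.bound m s m' s' =>
    rcases lt_trichotomy m m' with h | rfl | h
    · exact .inl (.inl h)
    · cases s <;> cases s' <;> simp
    · exact .inr (.inl h)
  case bound.bot => exact absurd hs' (not_sat_bot_of_le_inf hs trivial)
  case inf.bot => exact absurd hs' (not_sat_bot_of_le_inf hs trivial)
  case bot.bound => exact absurd hs (not_sat_bot_of_le_inf hs' trivial)
  case bot.inf => exact absurd hs (not_sat_bot_of_le_inf hs' trivial)

lemma sat_ite_le_iff {e e' : Entry} (h : e.le e' ∨ e'.le e) {a b : Option ℝ} :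
    (if e.le e' then e else e').sat a b ↔ e.sat a b ∧ e'.sat a b := by
  split_ifs with hle
  · exact ⟨fun hs => ⟨hs, sat_of_le hle hs⟩, And.left⟩
  · exact ⟨fun hs => ⟨sat_of_le (h.resolve_left hle) hs, hs⟩, And.right⟩

end Entry

lemma sem_entrywise_min {n : ℕ} (isP : Fin n → Bool) {M₁ M₂ : EDBM n}
    (hC : ∀ i j, (M₁ i j).le (M₂ i j) ∨ (M₂ i j).le (M₁ i j)) :
    sem isP (fun i j => if (M₁ i j).le (M₂ i j) then M₁ i j else M₂ i j) =
      sem isP M₁ ∩ sem isP M₂ := by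
  ext v
  simp only [sem, Set.mem_inter_iff, Set.mem_ofPred_eq, Entry.sat_ite_le_iff (hC _ _)]
  exact ⟨fun ⟨hv, h⟩ => ⟨⟨hv, fun i j => (h i j).1⟩, ⟨hv, fun i j => (h i j).2⟩⟩,
    fun ⟨⟨hv, h₁⟩, ⟨_, h₂⟩⟩ => ⟨hv, fun i j => ⟨h₁ i j, h₂ i j⟩⟩⟩

lemma le_or_le_of_mem_sem_inter {n : ℕ} {isP : Fin n → Bool} {M₁ M₂ : EDBM n} {v : EVal n}
    (hv : v ∈ sem isP M₁ ∩ sem isP M₂) (i j : Option (Fin n)) :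
    (M₁ i j).le (M₂ i j) ∨ (M₂ i j).le (M₁ i j) :=
  Entry.le_or_le_of_sat (hv.1.2 i j) (hv.2.2 i j)

theorem interE_correct_general {n : ℕ} (isP : Fin n → Bool) (M₁ M₂ : EDBM n) :
    sem isP (interE M₁ M₂) = sem isP M₁ ∩ sem isP M₂ := by
  unfold interE
  by_cases hE : M₁ = Mempty n ∨ M₂ = Mempty n
  · rw [if_pos hE, sem_Mempty]
    rcases hE with rfl | rfl <;> simp [sem_Mempty]
  rw [if_neg hE]
  by_cases hC : ∀ i j, (M₁ i j).le (M₂ i j) ∨ (M₂ i j).le (M₁ i j)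
  -- `rw [if_pos hC]` fails here: the `then` branch is an `EDBM n` only after unfolding `EDBM`.
  · exact (congrArg (sem isP) (if_pos hC)).trans (sem_entrywise_min isP hC)
  · refine (congrArg (sem isP) (if_neg hC)).trans ?_
    rw [sem_Mempty]
    exact (Set.eq_empty_of_forall_notMem fun v hv => hC (le_or_le_of_mem_sem_inter hv)).symm

/-- Correctness of intersection on normal-form EDBMs: `⟦M₁ ∩ M₂⟧ = ⟦M₁⟧ ∩ ⟦M₂⟧`. -/
theorem interE_correct {n : ℕ} (isP : Fin n → Bool) (M₁ M₂ : EDBM n)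
    (h₁ : InNormalForm isP M₁) (h₂ : InNormalForm isP M₂) :
    sem isP (interE M₁ M₂) = sem isP M₁ ∩ sem isP M₂ :=
  interE_correct_general isP M₁ M₂
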